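/- arXiv:2001.01308 — 4 statements merged into one kernel-verified Lean document; each statement's English description precedes it below -/
import Mathlib

section
/- Let p be an odd prime. Then every finite p-subgroup of PGL₂(ℂ) is cyclic. -/
/-!
A nontrivial finite `p`-group `G` has a nontrivial central element `z`; lift it to
`a ∈ GL₂(ℂ)`. Some power `a ^ p ^ k` is a scalar `μ` while `a` is not, so `a` has two distinct
eigenvalues (`a` is annihilated by the separable polynomial `X ^ p ^ k - μ`). For a lift `A` of
any element of `G` the commutator `⁅A, a⁆` is scalar of determinant one, hence of order dividing
`2`, and also of order dividing the odd number `p ^ k`; so `A` commutes with `a` and acts on the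
two eigenlines of `a` by scalars. The ratio of these two scalars is a character of the preimage
of `G` whose kernel is exactly the scalars, so `G` embeds into `ℂˣ` and is cyclic.
-/

open Matrix Polynomial
open scoped commutatorElement

lemma commutatorElement_pow_eq_one_of_mem_center {G : Type*} [Group G] {g h : G}
    {n : ℕ} (hc : ⁅g, h⁆ ∈ Subgroup.center G) (hn : h ^ n ∈ Subgroup.center G) :
    ⁅g, h⁆ ^ n = 1 := by
  have hconj : g * h * g⁻¹ = ⁅g, h⁆ * h := by group
  have hch : Commute ⁅g, h⁆ h := (Subgroup.mem_center_iff.mp hc h).symm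
  have : ⁅g, h⁆ ^ n * h ^ n = h ^ n := by
    rw [← hch.mul_pow, ← hconj, conj_pow, Subgroup.mem_center_iff.mp hn g, mul_inv_cancel_right]
  simpa using this

lemma eq_one_of_sq_eq_one_of_pow_eq_one {M : Type*} [Monoid M] {x : M} {n : ℕ} (hn : Odd n)
    (h2 : x ^ 2 = 1) (hx : x ^ n = 1) : x = 1 := by
  obtain ⟨m, rfl⟩ := hn
  rwa [pow_succ, pow_mul, h2, one_pow, one_mul] at hx

lemma isCyclic_of_ker_eq {H Q R : Type*} [Group H] [Group Q] [Finite Q] [CommRing R] [IsDomain R]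
    (π : H →* Q) (hπ : Function.Surjective π) (φ : H →* Rˣ) (hker : φ.ker = π.ker) :
    IsCyclic Q := by
  let e : Q ≃* H ⧸ φ.ker :=
    (QuotientGroup.quotientKerEquivOfSurjective π hπ).symm.trans
      (QuotientGroup.quotientMulEquivOfEq hker.symm)
  refine isCyclic_of_injective_ringHom ((Units.coeHom R).comp ((QuotientGroup.kerLift φ).comp e))
    ?_
  exact Units.val_injective.comp ((QuotientGroup.kerLift_injective φ).comp e.injective)

namespace Matrix

lemma mul_mul_eq_trace_smul_of_det_eq_zero {R : Type*} [CommRing R]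
    (M X : Matrix (Fin 2) (Fin 2) R) (h : M.det = 0) : M * X * M = (M * X).trace • M := by
  rw [det_fin_two] at h
  ext i j
  fin_cases i <;> fin_cases j <;> simp [Matrix.mul_apply, Fin.sum_univ_two, trace_fin_two]
  · linear_combination -X 1 1 * h
  · linear_combination X 0 1 * h
  · linear_combination X 1 0 * h
  · linear_combination -X 0 0 * h

variable {K : Type*} [Field K]

lemma mul_eq_smul_of_commute_of_det_eq_zero {M A : Matrix (Fin 2) (Fin 2) K} (hdet : M.det = 0)
    (htr : M.trace ≠ 0) (hA : Commute A M) : A * M = ((M * A).trace / M.trace) • M := by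
  have hsq : M * M = M.trace • M := by
    simpa using mul_mul_eq_trace_smul_of_det_eq_zero M 1 hdet
  have : M.trace • (A * M) = (M * A).trace • M := by
    rw [← mul_mul_eq_trace_smul_of_det_eq_zero M A hdet, ← hA.eq, mul_assoc, hsq,
      mul_smul_comm]
  rw [div_eq_inv_mul, mul_smul, ← this, smul_smul, inv_mul_cancel₀ htr, one_smul]

lemma eq_smul_one_of_aeval_eq_zero_of_charpoly_eq {n : Type*} [Fintype n] [DecidableEq n]
    [Nonempty n] {a : Matrix n n K} {f : K[X]} {α : K} (hf : f.Separable) (hfa : aeval a f = 0)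
    (hchar : a.charpoly = (X - C α) ^ Fintype.card n) : a = α • 1 := by
  have hsq : Squarefree (minpoly K a) :=
    hf.squarefree.squarefree_of_dvd (minpoly.dvd K a hfa)
  have hdvd : minpoly K a ∣ X - C α :=
    (hsq.dvd_pow_iff_dvd Fintype.card_ne_zero).mp (hchar ▸ a.minpoly_dvd_charpoly)
  have := minpoly.dvd_iff.mp hdvd
  rwa [map_sub, aeval_X, aeval_C, Algebra.algebraMap_eq_smul_one, sub_eq_zero] at this

lemma exists_trace_eq_add_det_eq_mul [IsAlgClosed K] (a : Matrix (Fin 2) (Fin 2) K) :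
    ∃ α β, a.trace = α + β ∧ a.det = α * β := by
  have hsplit := IsAlgClosed.splits a.charpoly
  have hcard : a.charpoly.roots.card = 2 := by
    rw [splits_iff_card_roots.mp hsplit, charpoly_natDegree_eq_dim, Fintype.card_fin]
  obtain ⟨α, β, hroots⟩ := Multiset.card_eq_two.mp hcard
  refine ⟨α, β, ?_, ?_⟩
  · simp [trace_eq_sum_roots_charpoly_of_splits hsplit, hroots]
  · simp [det_eq_prod_roots_charpoly_of_splits hsplit, hroots]

lemma eq_smul_one_of_pow_eq_smul_one {a : Matrix (Fin 2) (Fin 2) K} {n : ℕ} {μ α : K}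
    (hn : (n : K) ≠ 0) (hμ : μ ≠ 0) (hpow : a ^ n = μ • 1) (htr : a.trace = α + α)
    (hdet : a.det = α * α) : a = α • 1 := by
  refine eq_smul_one_of_aeval_eq_zero_of_charpoly_eq (separable_X_pow_sub_C μ hn hμ) ?_ ?_
  · rw [map_sub, map_pow, aeval_X, aeval_C, Algebra.algebraMap_eq_smul_one, hpow, sub_self]
  · rw [charpoly_fin_two, htr, hdet, Fintype.card_fin]
    simp only [map_add, map_mul]
    ring

variable {α β : K} {a : Matrix (Fin 2) (Fin 2) K}

lemma trace_sub_smul_one (htr : a.trace = α + β) : (a - β • 1).trace = α - β := by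
  rw [trace_sub, trace_smul, trace_one, htr, Fintype.card_fin]
  simp only [Nat.cast_ofNat, smul_eq_mul]
  ring

lemma det_sub_smul_one (htr : a.trace = α + β) (hdet : a.det = α * β) :
    (a - β • 1).det = 0 := by
  rw [trace_fin_two] at htr
  rw [det_fin_two] at hdet ⊢
  simp only [sub_apply, smul_apply, one_apply_eq, one_apply_ne zero_ne_one,
    one_apply_ne one_ne_zero, smul_eq_mul, mul_one, mul_zero, sub_zero]
  linear_combination hdet - β * htr

lemma mul_sub_smul_one_eq_smul_of_commute {A : Matrix (Fin 2) (Fin 2) K}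
    (htr : a.trace = α + β) (hdet : a.det = α * β) (hαβ : α ≠ β) (hA : Commute A a) :
    A * (a - β • 1) = (((a - β • 1) * A).trace / (α - β)) • (a - β • 1) := by
  rw [← trace_sub_smul_one htr]
  refine mul_eq_smul_of_commute_of_det_eq_zero (det_sub_smul_one htr hdet) ?_ ?_
  · rw [trace_sub_smul_one htr]
    exact sub_ne_zero.mpr hαβ
  · exact hA.sub_right ((Commute.one_right A).smul_right β)

end Matrix

namespace Matrix.GeneralLinearGroup

lemma mem_center_iff_exists_val_eq_smul_one {n R : Type*} [Fintype n] [DecidableEq n]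
    [CommRing R] {g : GL n R} :
    g ∈ Subgroup.center (GL n R) ↔ ∃ r : R, (g : Matrix n n R) = r • 1 := by
  simp [mem_center_iff_val_mem_range_scalar, smul_one_eq_diagonal, eq_comm]

section CommRing

variable {R : Type*} [CommRing R]

lemma sq_eq_one_of_mem_center_of_det_eq_one {c : GL (Fin 2) R} (hc : c ∈ Subgroup.center _)
    (hdet : (c : Matrix (Fin 2) (Fin 2) R).det = 1) : c ^ 2 = 1 := by
  obtain ⟨r, hr⟩ := mem_center_iff_exists_val_eq_smul_one.mp hc
  rw [hr, det_smul, Fintype.card_fin, det_one, mul_one] at hdet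
  ext : 1
  rw [Units.val_pow_eq_pow_val, hr, _root_.smul_pow, hdet, one_pow, one_smul, Units.val_one]

lemma commute_of_commute_mk {A a : GL (Fin 2) R} {n : ℕ} (hn : Odd n)
    (ha : a ^ n ∈ Subgroup.center _)
    (h : Commute (A : GL (Fin 2) R ⧸ Subgroup.center _) (a : GL (Fin 2) R ⧸ Subgroup.center _)) :
    Commute A a := by
  have hc : ⁅A, a⁆ ∈ Subgroup.center _ := by
    rw [← QuotientGroup.eq_one_iff, ← QuotientGroup.mk'_apply, map_commutatorElement]
    exact commutatorElement_eq_one_iff_commute.mpr h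
  have hdet : ((⁅A, a⁆ : GL (Fin 2) R) : Matrix (Fin 2) (Fin 2) R).det = 1 := by
    rw [← val_det_apply, map_commutatorElement,
      commutatorElement_eq_one_iff_commute.mpr (Commute.all _ _), Units.val_one]
  exact commutatorElement_eq_one_iff_commute.mp <| eq_one_of_sq_eq_one_of_pow_eq_one hn
    (sq_eq_one_of_mem_center_of_det_eq_one hc hdet)
    (commutatorElement_pow_eq_one_of_mem_center hc ha)

end CommRing

section Field

variable {K : Type*} [Field K] {a : GL (Fin 2) K} {α β : K}

lemma commute_val_of_mem_centralizer {A : GL (Fin 2) K} (hA : A ∈ Subgroup.centralizer {a}) :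
    Commute (A : Matrix (Fin 2) (Fin 2) K) a :=
  congrArg Units.val (Subgroup.mem_centralizer_singleton_iff.mp hA)

variable (htr : (a : Matrix (Fin 2) (Fin 2) K).trace = α + β)
    (hdet : (a : Matrix (Fin 2) (Fin 2) K).det = α * β) (hαβ : α ≠ β)

-- The eigenvalue of `A` on the `α`-eigenline of `a`, which is the image of the rank-one
-- matrix `a - β` (see `mul_sub_smul_one_eq_smul_of_commute`).
def eigenChar : Subgroup.centralizer {a} →* K where
  toFun A := (((a : Matrix (Fin 2) (Fin 2) K) - β • 1) * (A : GL (Fin 2) K)).trace / (α - β)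
  map_one' := by
    rw [Subgroup.coe_one, Units.val_one, mul_one, trace_sub_smul_one htr,
      div_self (sub_ne_zero.mpr hαβ)]
  map_mul' A B := by
    have key := fun (C : Subgroup.centralizer {a}) ↦
      mul_sub_smul_one_eq_smul_of_commute htr hdet hαβ (commute_val_of_mem_centralizer C.2)
    have hR : (a : Matrix (Fin 2) (Fin 2) K) - β • 1 ≠ 0 := fun h ↦
      sub_ne_zero.mpr hαβ (by rw [← trace_sub_smul_one htr, h, trace_zero])
    refine smul_left_injective K hR ?_
    dsimp only
    rw [← key, Subgroup.coe_mul, Units.val_mul, mul_assoc, key, mul_smul_comm, key, smul_smul,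
      mul_comm]

lemma val_mul_sub_smul_one_eq_eigenChar_smul (A : Subgroup.centralizer {a}) :
    ((A : GL (Fin 2) K) : Matrix (Fin 2) (Fin 2) K) * (a - β • 1) =
      eigenChar htr hdet hαβ A • ((a : Matrix (Fin 2) (Fin 2) K) - β • 1) :=
  mul_sub_smul_one_eq_smul_of_commute htr hdet hαβ (commute_val_of_mem_centralizer A.2)

lemma eigenChar_eq_of_val_eq_smul_one {A : Subgroup.centralizer {a}} {r : K}
    (hr : ((A : GL (Fin 2) K) : Matrix (Fin 2) (Fin 2) K) = r • 1) :
    eigenChar htr hdet hαβ A = r := by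
  rw [eigenChar, MonoidHom.coe_mk, OneHom.coe_mk, hr, mul_smul_comm, mul_one, trace_smul,
    trace_sub_smul_one htr, smul_eq_mul, mul_div_assoc, div_self (sub_ne_zero.mpr hαβ), mul_one]

def eigenRatio : Subgroup.centralizer {a} →* Kˣ :=
  (eigenChar htr hdet hαβ).toHomUnits /
    (eigenChar (htr.trans (add_comm α β)) (hdet.trans (mul_comm α β)) hαβ.symm).toHomUnits

lemma eigenRatio_eq_one_iff {A : Subgroup.centralizer {a}} :
    eigenRatio htr hdet hαβ A = 1 ↔ (A : GL (Fin 2) K) ∈ Subgroup.center _ := by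
  rw [eigenRatio, MonoidHom.div_apply, div_eq_one, Units.ext_iff, MonoidHom.coe_toHomUnits,
    MonoidHom.coe_toHomUnits, mem_center_iff_exists_val_eq_smul_one]
  constructor
  · intro h
    refine ⟨eigenChar htr hdet hαβ A, smul_right_injective _ (sub_ne_zero.mpr hαβ) ?_⟩
    have hβ := val_mul_sub_smul_one_eq_eigenChar_smul htr hdet hαβ A
    have hα := val_mul_sub_smul_one_eq_eigenChar_smul (htr.trans (add_comm α β))
      (hdet.trans (mul_comm α β)) hαβ.symm A
    rw [← h] at hα
    -- `(a - β) - (a - α) = (α - β) • 1`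
    have := congrArg₂ (· - ·) hβ hα
    rw [← mul_sub, ← smul_sub, sub_sub_sub_cancel_left, ← sub_smul, mul_smul_comm, mul_one,
      smul_smul, mul_comm] at this
    dsimp only
    rwa [smul_smul]
  · rintro ⟨r, hr⟩
    rw [eigenChar_eq_of_val_eq_smul_one _ _ _ hr, eigenChar_eq_of_val_eq_smul_one _ _ _ hr]

theorem isCyclic_of_forall_commute [IsAlgClosed K]
    (G : Subgroup (GL (Fin 2) K ⧸ Subgroup.center (GL (Fin 2) K))) [Finite G]
    (ha : a ∉ Subgroup.center _) {n : ℕ} (hn : (n : K) ≠ 0) (han : a ^ n ∈ Subgroup.center _)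
    (hG : ∀ A : GL (Fin 2) K, (A : GL (Fin 2) K ⧸ Subgroup.center _) ∈ G → Commute A a) :
    IsCyclic G := by
  obtain ⟨α, β, htr, hdet⟩ := exists_trace_eq_add_det_eq_mul (a : Matrix (Fin 2) (Fin 2) K)
  have hαβ : α ≠ β := by
    rintro rfl
    obtain ⟨μ, hμ⟩ := mem_center_iff_exists_val_eq_smul_one.mp han
    have hμ0 : μ ≠ 0 := by
      rintro rfl
      exact not_isUnit_zero (zero_smul K (1 : Matrix (Fin 2) (Fin 2) K) ▸ hμ ▸ (a ^ n).isUnit)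
    have hpow : (a : Matrix (Fin 2) (Fin 2) K) ^ n = μ • 1 := by
      rw [← hμ, Units.val_pow_eq_pow_val]
    exact ha (mem_center_iff_exists_val_eq_smul_one.mpr
      ⟨α, eq_smul_one_of_pow_eq_smul_one hn hμ0 hpow htr hdet⟩)
  have hle : G.comap (QuotientGroup.mk' _) ≤ Subgroup.centralizer {a} := fun A hA ↦
    Subgroup.mem_centralizer_singleton_iff.mpr (hG A hA)
  refine isCyclic_of_ker_eq ((QuotientGroup.mk' _).subgroupComap G)
    ((QuotientGroup.mk' _).subgroupComap_surjective_of_surjective G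
      (QuotientGroup.mk'_surjective _))
    ((eigenRatio htr hdet hαβ).comp (Subgroup.inclusion hle)) ?_
  ext A
  rw [MonoidHom.mem_ker, MonoidHom.comp_apply, eigenRatio_eq_one_iff, MonoidHom.mem_ker,
    ← OneMemClass.coe_eq_one]
  exact (QuotientGroup.eq_one_iff (A : GL (Fin 2) K)).symm

end Field

end Matrix.GeneralLinearGroup

theorem stmt_4 {p : ℕ} (hp : p.Prime) (hodd : Odd p)
    (G : Subgroup (GL (Fin 2) ℂ ⧸ Subgroup.center (GL (Fin 2) ℂ))) [Finite G]
    (hG : IsPGroup p G) : IsCyclic G := by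
  rcases subsingleton_or_nontrivial G with _ | _
  · exact isCyclic_of_subsingleton
  have : Fact p.Prime := ⟨hp⟩
  have := hG.center_nontrivial
  obtain ⟨⟨z, hz⟩, hz1⟩ := exists_ne (1 : Subgroup.center G)
  obtain ⟨k, hk⟩ := hG z
  obtain ⟨a, ha⟩ := QuotientGroup.mk_surjective (z : GL (Fin 2) ℂ ⧸ Subgroup.center _)
  have han : a ^ p ^ k ∈ Subgroup.center _ := by
    rw [← QuotientGroup.eq_one_iff, QuotientGroup.mk_pow, ha, ← Subgroup.coe_pow, hk,
      OneMemClass.coe_one]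
  have hpk : ((p ^ k : ℕ) : ℂ) ≠ 0 := by exact_mod_cast (pow_pos hp.pos k).ne'
  refine GeneralLinearGroup.isCyclic_of_forall_commute G ?_ hpk han ?_
  · rw [← QuotientGroup.eq_one_iff, ha]
    exact fun h ↦ hz1 (Subtype.ext (Subtype.ext h))
  · intro A hA
    refine GeneralLinearGroup.commute_of_commute_mk hodd.pow han ?_
    rw [ha]
    exact congrArg Subtype.val (Subgroup.mem_center_iff.mp hz ⟨_, hA⟩)
end

section
/- Every finite 3-subgroup of GL₂(ℤ) is cyclic. -/
/-!
Reduction modulo 3 is injective on every 3-subgroup of `GL₂(ℤ)`: an integer matrix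
`M = 1 + 3B` with `M³ = 1` satisfies `9 B (1 + 3B + 3B²) = 0`, and `1 + 3B + 3B²` is invertible
over `ℚ` because its determinant is `1` modulo `3`, so `B = 0`. Hence the order of a 3-subgroup
is a power of `3` dividing `|GL₂(𝔽₃)| = 48`, so it is `1` or `3`, and the group is cyclic.
-/

open Matrix

namespace Matrix

variable {m n : Type*}

theorem exists_eq_smul_of_map_intCast_eq_zero {k : ℕ} {A : Matrix m n ℤ}
    (h : A.map (Int.cast : ℤ → ZMod k) = 0) : ∃ B : Matrix m n ℤ, A = (k : ℤ) • B := by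
  refine ⟨A.map (· / k), ?_⟩
  ext i j
  have hdvd := (ZMod.intCast_zmod_eq_zero_iff_dvd _ _).1 (congrFun₂ h i j)
  simp [Int.mul_ediv_cancel' hdvd]

variable [Fintype n] [DecidableEq n]

theorem det_ne_zero_of_map_intCast_eq_one {k : ℕ} (hk : k ≠ 1) {A : Matrix n n ℤ}
    (h : A.map (Int.cast : ℤ → ZMod k) = 1) : A.det ≠ 0 := by
  have : Nontrivial (ZMod k) := ZMod.nontrivial_iff.2 hk
  intro h0
  have hdet := (Int.castRingHom (ZMod k)).map_det A
  rw [h0, map_zero] at hdet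
  exact zero_ne_one (hdet.trans (by simpa using congrArg det h))

theorem eq_zero_of_mul_eq_zero_of_det_ne_zero {R : Type*} [CommRing R] [NoZeroDivisors R]
    {B : Matrix m n R} {N : Matrix n n R} (hN : N.det ≠ 0) (h : B * N = 0) : B = 0 :=
  funext fun i => eq_zero_of_vecMul_eq_zero hN (congrFun h i)

theorem eq_one_of_pow_three_eq_one_of_map_eq_one {M : Matrix n n ℤ} (h3 : M ^ 3 = 1)
    (hM : M.map (Int.cast : ℤ → ZMod 3) = 1) : M = 1 := by
  obtain ⟨B, hB⟩ : ∃ B : Matrix n n ℤ, M - 1 = ((3 : ℕ) : ℤ) • B :=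
    exists_eq_smul_of_map_intCast_eq_zero (by simp [Matrix.map_sub, hM])
  rw [sub_eq_iff_eq_add'] at hB
  set N : Matrix n n ℤ := 1 + (3 : ℤ) • B + (3 : ℤ) • B ^ 2
  have hN : N.map (Int.cast : ℤ → ZMod 3) = 1 := by
    change (Int.castRingHom (ZMod 3)).mapMatrix N = 1
    have hthree : ((3 : ℤ) : ZMod 3) = 0 := rfl
    simp only [N, map_add, map_one, map_zsmul, ← Int.cast_smul_eq_zsmul (ZMod 3), hthree,
      zero_smul, add_zero]
  have hBN : B * N = 0 := by
    have h9 : (9 : ℤ) • (B * N) = 0 := by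
      rw [← sub_eq_zero.2 h3, hB]
      simp only [N]
      noncomm_ring
    exact (smul_eq_zero.1 h9).resolve_left (by norm_num)
  rw [hB, eq_zero_of_mul_eq_zero_of_det_ne_zero (det_ne_zero_of_map_intCast_eq_one (by norm_num) hN)
    hBN, smul_zero, add_zero]

theorem GeneralLinearGroup.eq_one_of_pow_three_eq_one_of_map_eq_one {g : GL n ℤ} (h3 : g ^ 3 = 1)
    (hg : GeneralLinearGroup.map (Int.castRingHom (ZMod 3)) g = 1) : g = 1 :=
  Units.ext <| Matrix.eq_one_of_pow_three_eq_one_of_map_eq_one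
    (by simpa using congrArg Units.val h3) (congrArg Units.val hg)

end Matrix

theorem IsPGroup.injective_of_map_ne_one {p : ℕ} [Fact p.Prime] {G H : Type*} [Group G] [Group H]
    (hG : IsPGroup p G) {f : G →* H} (hf : ∀ g : G, orderOf g = p → f g ≠ 1) :
    Function.Injective f := by
  rw [injective_iff_map_eq_one]
  intro g hg
  by_contra hne
  have hfin := (hG.isOfFinOrder (Fact.out : p.Prime).ne_zero g).orderOf_pos.ne'
  refine hf _ (orderOf_pow_orderOf_div hfin (hG.dvd_orderOf hne)) ?_
  rw [map_pow, hg, one_pow]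

theorem stmt_12 (G : Subgroup (GL (Fin 2) ℤ)) [Finite G] (hG : IsPGroup 3 G) :
    IsCyclic G := by
  have : Fact (Nat.Prime 3) := ⟨Nat.prime_three⟩
  let reduce : G →* GL (Fin 2) (ZMod 3) :=
    (GeneralLinearGroup.map (Int.castRingHom (ZMod 3))).comp G.subtype
  have hinj : Function.Injective reduce := hG.injective_of_map_ne_one fun g hg hred => by
    have hg1 : g = 1 := Subtype.ext <| GeneralLinearGroup.eq_one_of_pow_three_eq_one_of_map_eq_one
      (by rw [← Subgroup.coe_pow, ← hg, pow_orderOf_eq_one, Subgroup.coe_one]) hred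
    simp [hg1] at hg
  have hcard : Nat.card G ∣ 3 * 16 := by
    have h48 : Nat.card (GL (Fin 2) (ZMod 3)) = 3 * 16 := by
      rw [Matrix.card_GL_field]
      simp [Fin.prod_univ_two, ZMod.card]
    exact h48 ▸ Subgroup.card_dvd_of_injective reduce hinj
  obtain ⟨k, hk⟩ := IsPGroup.iff_card.mp hG
  refine isCyclic_of_card_dvd_prime (p := 3) ?_
  rw [hk] at hcard ⊢
  exact (Nat.Coprime.pow_left k (by norm_num : Nat.Coprime 3 16)).dvd_of_dvd_mul_right hcard
end

section
/- Every finite 3-subgroup of GL₃(ℤ) is cyclic. -/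
open Matrix Polynomial

lemma aux_pow9 (M : Matrix (Fin 3) (Fin 3) ℚ) (h9 : M ^ 9 = 1) : M ^ 3 = 1 := by
  have hint : IsIntegral ℚ M := ⟨M.charpoly, M.charpoly_monic, M.aeval_self_charpoly⟩
  set p := minpoly ℚ M with hp
  have hpd : p ∣ (X ^ 9 - 1 : ℚ[X]) := by
    apply minpoly.dvd
    simp [h9]
  have hfac : (X ^ 9 - 1 : ℚ[X]) = (X ^ 3 - 1) * cyclotomic 9 ℚ := by
    have h9c : cyclotomic (3 ^ (1 + 1)) ℚ = ∑ i ∈ Finset.range 3, ((X : ℚ[X]) ^ 3 ^ 1) ^ i :=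
      cyclotomic_prime_pow_eq_geom_sum (by norm_num)
    norm_num [Finset.sum_range_succ] at h9c
    rw [h9c]
    ring
  have hdeg : p.natDegree ≤ 3 := by
    have hdvd : p ∣ M.charpoly := minpoly.dvd ℚ M M.aeval_self_charpoly
    have := Polynomial.natDegree_le_of_dvd hdvd M.charpoly_monic.ne_zero
    simpa using this
  have hcop : IsCoprime p (cyclotomic 9 ℚ) := by
    refine ((cyclotomic.irreducible_rat (by norm_num)).coprime_iff_not_dvd.mpr ?_).symm
    intro hdvd
    have hne : p ≠ 0 := minpoly.ne_zero hint
    have h6 : Nat.totient 9 = 6 := by decide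
    have := Polynomial.natDegree_le_of_dvd hdvd hne
    rw [natDegree_cyclotomic, h6] at this
    omega
  have hdvd3 : p ∣ (X ^ 3 - 1 : ℚ[X]) :=
    hcop.dvd_of_dvd_mul_right (by rwa [← hfac])
  obtain ⟨q, hq⟩ := hdvd3
  have : aeval M (X ^ 3 - 1 : ℚ[X]) = 0 := by
    rw [hq, _root_.map_mul, minpoly.aeval, zero_mul]
  simpa [sub_eq_zero] using this

lemma aux_trace (M : Matrix (Fin 3) (Fin 3) ℚ) (h3 : M ^ 3 = 1) (hne : M ≠ 1)
    (hdet : M.det = 1) : M.trace = 0 := by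
  have hint : IsIntegral ℚ M := ⟨M.charpoly, M.charpoly_monic, M.aeval_self_charpoly⟩
  set p := minpoly ℚ M with hp
  have hpd : p ∣ (X ^ 3 - 1 : ℚ[X]) := by
    apply minpoly.dvd
    simp [h3]
  have hΦ : cyclotomic 3 ℚ = ∑ i ∈ Finset.range 3, (X : ℚ[X]) ^ i := cyclotomic_prime ℚ 3
  have hfac : (X ^ 3 - 1 : ℚ[X]) = (X - 1) * cyclotomic 3 ℚ := by
    rw [hΦ, mul_comm]; exact (geom_sum_mul X 3).symm
  have hΦp : cyclotomic 3 ℚ ∣ p := by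
    by_contra hc
    have hcop : IsCoprime p (cyclotomic 3 ℚ) :=
      (((cyclotomic.irreducible_rat (by norm_num)).coprime_iff_not_dvd).mpr hc).symm
    have hpd1 : p ∣ (X - 1 : ℚ[X]) := hcop.dvd_of_dvd_mul_right (by rwa [← hfac])
    have hXirr : Irreducible (X - 1 : ℚ[X]) := by
      simpa using irreducible_X_sub_C (1 : ℚ)
    obtain ⟨c, hc'⟩ := hpd1
    rcases hXirr.isUnit_or_isUnit hc' with h | h
    · exact absurd h (minpoly.not_isUnit ℚ M)
    · obtain ⟨u, rfl⟩ := h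
      have hassoc : Associated p (X - 1 : ℚ[X]) := ⟨u, hc'.symm⟩
      have hmoni : (X - 1 : ℚ[X]).Monic := by simpa using monic_X_sub_C (1 : ℚ)
      have hpeq : p = X - 1 := eq_of_monic_of_associated (minpoly.monic hint) hmoni hassoc
      have haev : aeval M p = 0 := minpoly.aeval ℚ M
      rw [hpeq] at haev
      simp only [map_sub, aeval_X, _root_.map_one] at haev
      exact hne (by rwa [sub_eq_zero] at haev)
  have hΦchar : cyclotomic 3 ℚ ∣ M.charpoly :=
    hΦp.trans (minpoly.dvd ℚ M M.aeval_self_charpoly)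
  obtain ⟨L, hL⟩ := hΦchar
  have hΦmonic : (cyclotomic 3 ℚ).Monic := cyclotomic.monic 3 ℚ
  have hLmonic : L.Monic := by
    have h := M.charpoly_monic
    rw [hL] at h
    exact hΦmonic.of_mul_monic_left h
  have hdegL : L.natDegree = 1 := by
    have h : M.charpoly.natDegree = 3 := by simp
    have h2 : Nat.totient 3 = 2 := by decide
    rw [hL, natDegree_mul hΦmonic.ne_zero hLmonic.ne_zero, natDegree_cyclotomic, h2] at h
    omega
  have hLform : L = X + C (L.coeff 0) := hLmonic.eq_X_add_C hdegL
  have hc0 : M.charpoly.coeff 0 = -1 := by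
    have h := M.det_eq_sign_charpoly_coeff
    rw [hdet] at h
    norm_num at h
    linarith
  have hL0 : L.coeff 0 = -1 := by
    have h : M.charpoly.coeff 0 = (cyclotomic 3 ℚ).coeff 0 * L.coeff 0 := by
      rw [hL, mul_coeff_zero]
    rw [hc0, cyclotomic_coeff_zero ℚ (by norm_num)] at h
    linarith
  have hchar : M.charpoly = X ^ 3 - 1 := by
    rw [hL, hLform, hL0, hΦ]
    simp only [Finset.sum_range_succ, Finset.sum_range_zero]
    ring_nf
    simp [map_neg]
    ring
  have h := M.trace_eq_neg_charpoly_coeff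
  rw [hchar] at h
  simp only [Fintype.card_fin] at h
  rw [h]
  norm_num [coeff_sub, coeff_X_pow, coeff_one]

lemma aux_powk : ∀ (k : ℕ) (M : Matrix (Fin 3) (Fin 3) ℚ), M ^ (3 ^ k) = 1 → M ^ 3 = 1 := by
  intro k
  induction k with
  | zero =>
    intro M h
    rw [pow_zero, pow_one] at h
    rw [h, one_pow]
  | succ k ih =>
    intro M h
    apply aux_pow9
    have h3 : (M ^ 3) ^ (3 ^ k) = 1 := by
      rw [← pow_mul, show 3 * 3 ^ k = 3 ^ (k + 1) by rw [pow_succ]; ring]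
      exact h
    have h9 := ih (M ^ 3) h3
    rw [← pow_mul] at h9
    norm_num at h9
    exact h9

theorem stmt_13 (G : Subgroup (GL (Fin 3) ℤ)) [Finite G] (hG : IsPGroup 3 G) :
    IsCyclic G := by
  classical
  have : Fintype G := Fintype.ofFinite G
  set n := Fintype.card G with hn
  let π : GL (Fin 3) ℤ →* Matrix (Fin 3) (Fin 3) ℚ :=
    ((Int.castRingHom ℚ).mapMatrix.toMonoidHom).comp (Units.coeHom _)
  let φ : G →* Matrix (Fin 3) (Fin 3) ℚ := π.comp G.subtype
  have hφinj : Function.Injective φ := by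
    intro a b hab
    apply Subtype.ext
    apply Units.ext
    have : ((a : GL (Fin 3) ℤ) : Matrix (Fin 3) (Fin 3) ℤ).map (Int.cast : ℤ → ℚ)
        = ((b : GL (Fin 3) ℤ) : Matrix (Fin 3) (Fin 3) ℤ).map (Int.cast : ℤ → ℚ) := by
      simpa [φ, π, RingHom.mapMatrix_apply] using hab
    exact Matrix.map_injective Int.cast_injective this
  have key : ∀ g : G, (φ g) ^ 3 = 1 := by
    intro g
    obtain ⟨k, hk⟩ := hG g
    apply aux_powk k
    rw [← map_pow, hk, _root_.map_one]
  have hdet : ∀ g : G, (φ g).det = 1 := by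
    intro g
    have h3 : (φ g).det ^ 3 = 1 := by rw [← det_pow, key g, det_one]
    set x := (φ g).det
    have h0 : (x - 1) * (x ^ 2 + x + 1) = 0 := by linear_combination h3
    rcases mul_eq_zero.mp h0 with h | h
    · linarith [sub_eq_zero.mp h]
    · nlinarith [sq_nonneg (2 * x + 1)]
  let S : Matrix (Fin 3) (Fin 3) ℚ := ∑ g : G, φ g
  have hS2 : S * S = (n : ℚ) • S := by
    have hrow : ∀ g : G, ∑ h : G, φ g * φ h = S := by
      intro g
      calc ∑ h : G, φ g * φ h = ∑ h : G, φ (g * h) := by simp [_root_.map_mul]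
        _ = ∑ h : G, φ h :=
            Fintype.sum_equiv (Equiv.mulLeft g) (fun h => φ (g * h)) φ (fun h => rfl)
        _ = S := rfl
    calc S * S = ∑ g : G, ∑ h : G, φ g * φ h := by
          rw [Finset.sum_mul_sum]
      _ = ∑ _g : G, S := Finset.sum_congr rfl (fun g _ => hrow g)
      _ = (n : ℚ) • S := by
          rw [Finset.sum_const, Finset.card_univ, Nat.cast_smul_eq_nsmul]
  have hone : φ 1 = 1 := _root_.map_one φ
  have htr : S.trace = 3 := by
    have h1 : S.trace = ∑ g : G, (φ g).trace := trace_sum _ _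
    rw [h1, Finset.sum_eq_single (1 : G)]
    · rw [hone, trace_one]; norm_num
    · intro g _ hg
      refine aux_trace _ (key g) ?_ (hdet g)
      intro h1'
      exact hg (hφinj (by rw [h1', hone]))
    · intro h; exact absurd (Finset.mem_univ _) h
  have hn0 : (n : ℚ) ≠ 0 := Nat.cast_ne_zero.mpr Fintype.card_ne_zero
  set P : Matrix (Fin 3) (Fin 3) ℚ := (n : ℚ)⁻¹ • S with hPdef
  have hP : P * P = P := by
    rw [hPdef, smul_mul_assoc, mul_smul_comm, hS2, smul_smul, smul_smul]
    congr 1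
    field_simp
  set f := Matrix.toLin' P with hfdef
  have hf : f ∘ₗ f = f := by rw [hfdef, ← Matrix.toLin'_mul, hP]
  obtain ⟨pp, hpp⟩ := (LinearMap.isProj_iff_isIdempotentElem f).mpr hf
  have htrf : LinearMap.trace ℚ (Fin 3 → ℚ) f = (Module.finrank ℚ pp : ℚ) := hpp.trace
  have htrP : LinearMap.trace ℚ (Fin 3 → ℚ) f = P.trace := by
    rw [LinearMap.trace_eq_matrix_trace ℚ (Pi.basisFun ℚ (Fin 3)),
      LinearMap.toMatrix_eq_toMatrix', hfdef, LinearMap.toMatrix'_toLin']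
  have hPt : P.trace = (n : ℚ)⁻¹ * 3 := by
    rw [hPdef, trace_smul, htr]; simp [smul_eq_mul]
  set r := Module.finrank ℚ pp with hr
  have hq : (n : ℚ) * r = 3 := by
    have h2 : (r : ℚ) = (n : ℚ)⁻¹ * 3 := by rw [← htrf, htrP, hPt]
    rw [h2]
    field_simp
  have hnat : n * r = 3 := by exact_mod_cast hq
  have hdvd : n ∣ 3 := ⟨r, hnat.symm⟩
  rcases (Nat.prime_three.eq_one_or_self_of_dvd n hdvd) with h | h
  · have : Subsingleton G := by
      rw [← Fintype.card_le_one_iff_subsingleton, ← hn, h]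
    exact isCyclic_of_subsingleton
  · have : Fact (Nat.Prime 3) := ⟨Nat.prime_three⟩
    exact isCyclic_of_prime_card (by rw [Nat.card_eq_fintype_card, ← hn, h] : Nat.card G = 3)
end

section
/- Let G be a finite 3-group acting by group automorphisms on the lattice Λ = ℤ² (i.e. via a homomorphism G → GL₂(ℤ)). Then the sublattice Λ^G of G-invariant elements does not have rank 1: either Λ^G = 0 or Λ^G = Λ, i.e. either the only invariant element is 0 or the action of G on Λ is trivial. -/
/-!
Each `ρ g` is an integer matrix of odd order `3 ^ k`, so its determinant is `1`. If some nonzero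
vector is invariant, `ρ g` also has eigenvalue `1`, hence trace `2`, and Cayley–Hamilton makes
`N = ρ g - 1` square to zero. Then `1 = (1 + N) ^ (3 ^ k) = 1 + 3 ^ k • N`, and since `ℤ²` is
torsion-free, `N = 0`: every `ρ g` is the identity.
-/

open Matrix

theorem eq_one_of_pow_eq_one_of_sub_one_sq_eq_zero {R : Type*} [Ring R] [IsAddTorsionFree R]
    {u : R} {n : ℕ} (hn : n ≠ 0) (hu : u ^ n = 1) (hu1 : (u - 1) ^ 2 = 0) : u = 1 := by
  set N := u - 1
  have hpow : ∀ m : ℕ, (1 + N) ^ m = 1 + m • N := by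
    intro m
    induction m with
    | zero => simp
    | succ m ih =>
      rw [pow_succ, ih, add_mul, one_mul, mul_add, mul_one, smul_mul_assoc, ← sq, hu1, smul_zero,
        add_zero, succ_nsmul', add_assoc]
  have : n • N = 0 := by simpa [N, hu] using hpow n
  exact sub_eq_zero.mp ((nsmul_eq_zero_iff.mp this).resolve_right hn)

namespace Matrix

instance {m n α : Type*} [AddMonoid α] [IsAddTorsionFree α] :
    IsAddTorsionFree (Matrix m n α) :=
  Pi.instIsAddTorsionFree

section FinTwo

variable {R : Type*} [CommRing R]

theorem sq_sub_trace_smul_add_det_smul_fin_two (M : Matrix (Fin 2) (Fin 2) R) :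
    M ^ 2 - M.trace • M + M.det • 1 = 0 := by
  ext i j
  fin_cases i <;> fin_cases j <;> simp [sq, mul_apply, trace_fin_two, det_fin_two] <;> ring

theorem det_sub_one_fin_two (M : Matrix (Fin 2) (Fin 2) R) :
    (M - 1).det = M.det - M.trace + 1 := by
  simp only [det_fin_two, trace_fin_two, sub_apply, one_apply_eq, one_apply_ne zero_ne_one,
    one_apply_ne one_ne_zero, sub_zero]
  ring

theorem sub_one_sq_eq_zero_of_det_eq_one_of_det_sub_one_eq_zero {M : Matrix (Fin 2) (Fin 2) R}
    (hdet : M.det = 1) (hdet1 : (M - 1).det = 0) : (M - 1) ^ 2 = 0 := by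
  have htr : M.trace = 2 := by
    rw [det_sub_one_fin_two, hdet] at hdet1
    linear_combination -hdet1
  have hcayley := M.sq_sub_trace_smul_add_det_smul_fin_two
  rw [htr, hdet, one_smul, two_smul] at hcayley
  rw [← hcayley]
  noncomm_ring

end FinTwo

theorem eq_one_of_pow_eq_one_of_mulVec_eq_self {M : Matrix (Fin 2) (Fin 2) ℤ} {n : ℕ}
    (hn : Odd n) (hM : M ^ n = 1) {v : Fin 2 → ℤ} (hv : v ≠ 0) (hfix : M *ᵥ v = v) : M = 1 := by
  have hdet : M.det = 1 := hn.pow_inj.mp (by rw [← det_pow, hM, det_one, one_pow])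
  have hdet1 : (M - 1).det = 0 :=
    exists_mulVec_eq_zero_iff.mp ⟨v, hv, by rw [sub_mulVec, hfix, one_mulVec, sub_self]⟩
  exact eq_one_of_pow_eq_one_of_sub_one_sq_eq_zero hn.pos.ne' hM
    (sub_one_sq_eq_zero_of_det_eq_one_of_det_sub_one_eq_zero hdet hdet1)

end Matrix

theorem stmt_14_general (G : Type*) [Group G] (hG : IsPGroup 3 G)
    (ρ : G →* GL (Fin 2) ℤ) :
    (∀ v : Fin 2 → ℤ,
        (∀ g : G, ((ρ g : GL (Fin 2) ℤ) : Matrix (Fin 2) (Fin 2) ℤ).mulVec v = v) → v = 0) ∨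
    (∀ (g : G) (v : Fin 2 → ℤ),
        ((ρ g : GL (Fin 2) ℤ) : Matrix (Fin 2) (Fin 2) ℤ).mulVec v = v) := by
  refine or_iff_not_imp_left.mpr fun hfixed g w => ?_
  push Not at hfixed
  obtain ⟨v, hv, hv0⟩ := hfixed
  obtain ⟨k, hk⟩ := hG g
  have hpow : ((ρ g : GL (Fin 2) ℤ) : Matrix (Fin 2) (Fin 2) ℤ) ^ 3 ^ k = 1 := by
    rw [← Units.val_pow_eq_pow_val, ← map_pow, hk, map_one, Units.val_one]
  rw [eq_one_of_pow_eq_one_of_mulVec_eq_self (Odd.pow (by decide)) hpow hv0 (hv g), one_mulVec]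

theorem stmt_14 (G : Type*) [Group G] [Finite G] (hG : IsPGroup 3 G)
    (ρ : G →* GL (Fin 2) ℤ) :
    (∀ v : Fin 2 → ℤ,
        (∀ g : G, ((ρ g : GL (Fin 2) ℤ) : Matrix (Fin 2) (Fin 2) ℤ).mulVec v = v) → v = 0) ∨
    (∀ (g : G) (v : Fin 2 → ℤ),
        ((ρ g : GL (Fin 2) ℤ) : Matrix (Fin 2) (Fin 2) ℤ).mulVec v = v) :=
  stmt_14_general G hG ρ
end
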